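/- Let λ > 0, A < B, and let f : [A,B] → ℝ be twice continuously differentiable. For N ≥ 2 set Δ_N = (B−A)/(N−1), t_j = A + (j−1)Δ_N for j = 1,…,N, let Σ_N be the N×N matrix with entries (Σ_N)_{ij} = e^{−λ|t_i − t_j|}, and let f_N = (f(t_1),…,f(t_N))ᵀ. Then lim_{N→∞} f_Nᵀ Σ_N⁻¹ f_N = (1/(2λ)) [ f(A)(λ f(A) − f'(A)) + f(B)(λ f(B) + f'(B)) + ∫_A^B (λ² f(t) − f''(t)) f(t) dt ]. -/

import Mathlib

/-!
Writing `r = e^{-λΔ}` for the grid step `Δ`, the covariance matrix is the AR(1) correlation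
matrix `Σ = (r^{|i-j|})`. It is whitened by the innovations `(Cv)₀ = v₀`, `(Cv)ᵢ = vᵢ - r vᵢ₋₁`:
`C Σ Cᵀ = diag(1, 1 - r², …, 1 - r²)`, so `vᵀ Σ⁻¹ v = v₀² + ∑ (vₖ₊₁ - r vₖ)² / (1 - r²)`.
For `v = f_N` the innovation divided by `Δ` converges uniformly to `f' + λ f`, and
`Δ / (1 - r²) → 1 / (2λ)`, so the sum is a Riemann sum of `(f' + λ f)² / (2λ)`. Finally
`(f' + λ f)² = (λ² f - f'') f + (f f' + λ f²)'` turns its integral into the boundary terms.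
-/

open Matrix Filter Set Topology

lemma Fin.sum_ite_val_eq {M : Type*} [AddCommMonoid M] {N : ℕ} (x : ℕ → M) (a : ℕ) :
    ∑ k : Fin N, (if (k : ℕ) = a then x k else 0) = if a < N then x a else 0 := by
  rw [Fin.sum_univ_eq_sum_range (fun k => if k = a then x k else 0), Finset.sum_ite_eq']
  simp only [Finset.mem_range]

lemma abs_natCast_sub_natCast {R : Type*} [Ring R] [LinearOrder R] [IsStrictOrderedRing R]
    (i j : ℕ) : |(i : R) - j| = Nat.dist i j := by
  rcases le_total i j with h | h
  · rw [Nat.dist_eq_sub_of_le h, Nat.cast_sub h, abs_sub_comm,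
      abs_of_nonneg (sub_nonneg.2 (Nat.cast_le.2 h))]
  · rw [Nat.dist_eq_sub_of_le_right h, Nat.cast_sub h,
      abs_of_nonneg (sub_nonneg.2 (Nat.cast_le.2 h))]

namespace AR1

open Finset

variable (r : ℝ) {N : ℕ}

def corr (N : ℕ) : Matrix (Fin N) (Fin N) ℝ := of fun i j => r ^ Nat.dist i j

def innov (N : ℕ) : Matrix (Fin N) (Fin N) ℝ :=
  of fun i j => (if (j : ℕ) = i then 1 else 0) - if (j : ℕ) + 1 = i then r else 0

def innovVar (i : ℕ) : ℝ := if i = 0 then 1 else 1 - r ^ 2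

def powUpper (N : ℕ) : Matrix (Fin N) (Fin N) ℝ :=
  of fun i j => if (i : ℕ) ≤ j then r ^ ((j : ℕ) - i) else 0

lemma innov_mulVec (x : ℕ → ℝ) (i : Fin N) :
    (innov r N *ᵥ fun k => x k) i = x i - if (i : ℕ) = 0 then 0 else r * x (i - 1) := by
  simp only [mulVec, dotProduct, innov, of_apply, sub_mul, ite_mul, one_mul, zero_mul,
    sum_sub_distrib, Fin.sum_ite_val_eq, i.isLt, if_true]
  obtain ⟨_ | m, hm⟩ := i
  · simp
  · simp only [Nat.add_right_cancel_iff, Fin.sum_ite_val_eq (fun k => r * x k),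
      Nat.add_one_ne_zero, if_false, Nat.add_sub_cancel, Nat.lt_of_succ_lt hm, if_true]

lemma innov_transpose_mulVec (x : ℕ → ℝ) (i : Fin N) :
    ((innov r N)ᵀ *ᵥ fun k => x k) i = x i - if (i : ℕ) + 1 < N then r * x (i + 1) else 0 := by
  simp only [mulVec, dotProduct, transpose_apply, innov, of_apply, sub_mul, ite_mul, one_mul,
    zero_mul, sum_sub_distrib, @eq_comm ℕ (i : ℕ), @eq_comm ℕ ((i : ℕ) + 1),
    Fin.sum_ite_val_eq, i.isLt, if_true, Fin.sum_ite_val_eq (fun k => r * x k)]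

lemma innov_mul_corr :
    innov r N * corr r N = diagonal (fun i : Fin N => innovVar r i) * powUpper r N := by
  ext ⟨a, ha⟩ ⟨b, hb⟩
  change (innov r N *ᵥ fun k : Fin N => r ^ Nat.dist k b) ⟨a, ha⟩ = _
  rw [innov_mulVec r (fun k => r ^ Nat.dist k b), diagonal_mul, powUpper, of_apply, innovVar]
  dsimp only
  rcases Nat.eq_zero_or_pos a with rfl | hpos
  · simp [Nat.dist_zero_left]
  rw [if_neg hpos.ne', if_neg hpos.ne']
  by_cases hab : a ≤ b
  · rw [if_pos hab, Nat.dist_eq_sub_of_le hab, Nat.dist_eq_sub_of_le (by omega),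
      show b - (a - 1) = b - a + 1 by omega]
    ring
  · rw [if_neg hab, Nat.dist_eq_sub_of_le_right (by omega),
      Nat.dist_eq_sub_of_le_right (by omega : b ≤ a - 1), show a - b = a - 1 - b + 1 by omega]
    ring

lemma innov_transpose_mul_powUpper : (innov r N)ᵀ * powUpper r N = 1 := by
  ext ⟨a, ha⟩ ⟨b, hb⟩
  change ((innov r N)ᵀ *ᵥ fun k : Fin N => if (k : ℕ) ≤ b then r ^ (b - k) else 0) ⟨a, ha⟩ = _
  rw [innov_transpose_mulVec r (fun k => if k ≤ b then r ^ (b - k) else 0)]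
  simp only [one_apply, Fin.mk.injEq]
  rcases lt_trichotomy a b with hab | rfl | hab
  · rw [if_pos hab.le, if_pos (by omega), if_pos (Nat.succ_le_of_lt hab), if_neg hab.ne,
      show b - a = b - (a + 1) + 1 by omega]
    ring
  · simp
  · rw [if_neg (by omega : ¬ a ≤ b), if_neg (by omega : ¬ a + 1 ≤ b), if_neg hab.ne']
    simp

lemma corr_inv (hr : r ^ 2 ≠ 1) :
    (corr r N)⁻¹ = (innov r N)ᵀ * diagonal (fun i : Fin N => (innovVar r i)⁻¹) * innov r N := by
  refine inv_eq_left_inv ?_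
  have hvar : diagonal (fun i : Fin N => (innovVar r i)⁻¹) *
      diagonal (fun i : Fin N => innovVar r i) = 1 := by
    rw [diagonal_mul_diagonal, ← diagonal_one]
    congr 1
    ext i
    refine inv_mul_cancel₀ ?_
    unfold innovVar
    split_ifs
    · exact one_ne_zero
    · exact sub_ne_zero.mpr hr.symm
  rw [Matrix.mul_assoc, innov_mul_corr, Matrix.mul_assoc, ← Matrix.mul_assoc (diagonal _), hvar,
    Matrix.one_mul, innov_transpose_mul_powUpper]

lemma dotProduct_corr_inv_mulVec (hr : r ^ 2 ≠ 1) (hN : 0 < N) (v : ℕ → ℝ) :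
    (fun i : Fin N => v i) ⬝ᵥ (corr r N)⁻¹ *ᵥ (fun i : Fin N => v i)
      = v 0 ^ 2 + ∑ k ∈ range (N - 1), (v (k + 1) - r * v k) ^ 2 / (1 - r ^ 2) := by
  rw [corr_inv r hr, ← mulVec_mulVec, ← mulVec_mulVec, dotProduct_mulVec, vecMul_transpose,
    dotProduct]
  simp only [mulVec_diagonal, innov_mulVec]
  obtain ⟨n, rfl⟩ : ∃ n, N = n + 1 := ⟨N - 1, by omega⟩
  rw [Fin.sum_univ_eq_sum_range (fun i => (v i - if i = 0 then 0 else r * v (i - 1)) *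
    ((innovVar r i)⁻¹ * (v i - if i = 0 then 0 else r * v (i - 1)))), sum_range_succ',
    Nat.add_sub_cancel, add_comm]
  simp only [innovVar, if_true, inv_one, sub_zero, Nat.add_one_ne_zero, if_false,
    Nat.add_sub_cancel]
  congr 1
  · ring
  · exact sum_congr rfl fun k _ => by ring

end AR1

lemma expKernel_grid_eq_corr (lam A Δ : ℝ) (hΔ : 0 ≤ Δ) (N : ℕ) :
    (of fun i j : Fin N => Real.exp (-lam * |(A + (i : ℕ) * Δ) - (A + (j : ℕ) * Δ)|)) =
      AR1.corr (Real.exp (-lam * Δ)) N := by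
  ext i j
  rw [of_apply, AR1.corr, of_apply, ← Real.exp_nat_mul, ← abs_natCast_sub_natCast,
    show A + (i : ℕ) * Δ - (A + (j : ℕ) * Δ) = ((i : ℕ) - (j : ℕ)) * Δ by ring, abs_mul,
    abs_of_nonneg hΔ]
  ring_nf

noncomputable def gridStep (A B : ℝ) (N : ℕ) : ℝ := (B - A) / ((N : ℝ) - 1)

noncomputable def gridPt (A B : ℝ) (N k : ℕ) : ℝ := A + k * gridStep A B N

section Grid

variable {A B : ℝ} {N k : ℕ}

lemma gridPt_zero : gridPt A B N 0 = A := by simp [gridPt]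

lemma gridPt_succ : gridPt A B N (k + 1) = gridPt A B N k + gridStep A B N := by
  simp only [gridPt]; push_cast; ring

lemma gridPt_sub_one (hN : 2 ≤ N) : gridPt A B N (N - 1) = B := by
  have h : (N : ℝ) - 1 ≠ 0 := by
    have : (2 : ℝ) ≤ N := by exact_mod_cast hN
    linarith
  rw [gridPt, gridStep, Nat.cast_sub (by omega), Nat.cast_one]
  field_simp
  ring

lemma gridStep_nonneg (hAB : A ≤ B) (hN : 2 ≤ N) : 0 ≤ gridStep A B N := by
  have : (2 : ℝ) ≤ N := by exact_mod_cast hN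
  exact div_nonneg (by linarith) (by linarith)

lemma gridStep_pos (hAB : A < B) (hN : 2 ≤ N) : 0 < gridStep A B N := by
  have : (2 : ℝ) ≤ N := by exact_mod_cast hN
  exact div_pos (by linarith) (by linarith)

lemma gridPt_le_gridPt_succ (hAB : A ≤ B) (hN : 2 ≤ N) : gridPt A B N k ≤ gridPt A B N (k + 1) := by
  rw [gridPt_succ]
  exact le_add_of_nonneg_right (gridStep_nonneg hAB hN)

lemma Icc_gridPt_subset (hAB : A ≤ B) (hk : k < N - 1) :
    Icc (gridPt A B N k) (gridPt A B N (k + 1)) ⊆ Icc A B := by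
  have hk' : ((k + 1 : ℕ) : ℝ) ≤ ((N - 1 : ℕ) : ℝ) := by exact_mod_cast hk
  refine Icc_subset_Icc ?_ ?_
  · exact le_add_of_nonneg_right (mul_nonneg k.cast_nonneg (gridStep_nonneg hAB (by omega)))
  · calc gridPt A B N (k + 1) ≤ gridPt A B N (N - 1) := by
          unfold gridPt; gcongr; exact gridStep_nonneg hAB (by omega)
      _ = B := gridPt_sub_one (by omega)

lemma tendsto_gridStep : Tendsto (gridStep A B) atTop (𝓝 0) :=
  tendsto_const_nhds.div_atTop (tendsto_atTop_add_const_right _ _ tendsto_natCast_atTop_atTop)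

lemma tendsto_gridStep_nhdsNE (hAB : A < B) : Tendsto (gridStep A B) atTop (𝓝[≠] 0) :=
  tendsto_nhdsWithin_of_tendsto_nhds_of_eventually_within _ tendsto_gridStep
    ((eventually_ge_atTop 2).mono fun _ hN => (gridStep_pos hAB hN).ne')

end Grid

def GridApprox (A B : ℝ) (y : ℕ → ℕ → ℝ) (φ : ℝ → ℝ) : Prop :=
  ∀ ε > 0, ∀ᶠ N in atTop, ∀ k < N - 1,
    ∀ s ∈ Icc (gridPt A B N k) (gridPt A B N (k + 1)), |y N k - φ s| ≤ ε

lemma abs_mul_sub_integral_le {a b c ε : ℝ} {φ : ℝ → ℝ} (hab : a ≤ b)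
    (hφ : IntervalIntegrable φ MeasureTheory.volume a b) (h : ∀ s ∈ Icc a b, |c - φ s| ≤ ε) :
    |(b - a) * c - ∫ s in a..b, φ s| ≤ ε * (b - a) := by
  have hint : (b - a) * c - ∫ s in a..b, φ s = ∫ s in a..b, (c - φ s) := by
    rw [intervalIntegral.integral_sub intervalIntegrable_const hφ, intervalIntegral.integral_const,
      smul_eq_mul]
  rw [hint, ← abs_of_nonneg (sub_nonneg.2 hab), ← Real.norm_eq_abs]
  refine intervalIntegral.norm_integral_le_of_norm_le_const fun s hs => h s ?_
  rw [uIoc_of_le hab] at hs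
  exact Ioc_subset_Icc_self hs

namespace GridApprox

variable {A B : ℝ} {y z : ℕ → ℕ → ℝ} {φ ψ : ℝ → ℝ}

lemma of_exists_eq (hAB : A ≤ B) (hφ : ContinuousOn φ (Icc A B))
    (h : ∀ᶠ N in atTop, ∀ k < N - 1,
      ∃ ξ ∈ Icc (gridPt A B N k) (gridPt A B N (k + 1)), y N k = φ ξ) :
    GridApprox A B y φ := by
  intro ε hε
  obtain ⟨δ, hδ, hφδ⟩ := Metric.uniformContinuousOn_iff_le.1
    (isCompact_Icc.uniformContinuousOn_of_continuous hφ) ε hε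
  filter_upwards [h, tendsto_gridStep.eventually (eventually_le_nhds hδ)] with N hN hΔ k hk s hs
  obtain ⟨ξ, hξ, hyξ⟩ := hN k hk
  have hsub := Icc_gridPt_subset hAB hk
  have hdist : dist ξ s ≤ δ := by
    rw [gridPt_succ] at hξ hs
    rw [Real.dist_eq, abs_le]
    constructor <;> linarith [hξ.1, hξ.2, hs.1, hs.2]
  simpa only [hyξ, Real.dist_eq] using hφδ ξ (hsub hξ) s (hsub hs) hdist

lemma const {c : ℕ → ℝ} {c₀ : ℝ} (hc : Tendsto c atTop (𝓝 c₀)) :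
    GridApprox A B (fun N _ => c N) (fun _ => c₀) := by
  intro ε hε
  filter_upwards [Metric.tendsto_nhds.1 hc ε hε] with N hN _ _ _ _
  exact (Real.dist_eq _ _ ▸ hN).le

lemma add (hy : GridApprox A B y φ) (hz : GridApprox A B z ψ) :
    GridApprox A B (fun N k => y N k + z N k) (fun s => φ s + ψ s) := by
  intro ε hε
  filter_upwards [hy (ε / 2) (by positivity), hz (ε / 2) (by positivity)] with N hyN hzN k hk s hs
  calc |y N k + z N k - (φ s + ψ s)| = |(y N k - φ s) + (z N k - ψ s)| := by ring_nf
    _ ≤ |y N k - φ s| + |z N k - ψ s| := abs_add_le _ _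
    _ ≤ ε / 2 + ε / 2 := add_le_add (hyN k hk s hs) (hzN k hk s hs)
    _ = ε := by ring

lemma mul (hAB : A ≤ B) (hφ : ContinuousOn φ (Icc A B)) (hψ : ContinuousOn ψ (Icc A B))
    (hy : GridApprox A B y φ) (hz : GridApprox A B z ψ) :
    GridApprox A B (fun N k => y N k * z N k) (fun s => φ s * ψ s) := by
  obtain ⟨Mφ, hMφ⟩ := isCompact_Icc.exists_bound_of_continuousOn hφ
  obtain ⟨Mψ, hMψ⟩ := isCompact_Icc.exists_bound_of_continuousOn hψ
  set C := |Mφ| + |Mψ| + 1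
  have hφC : ∀ s ∈ Icc A B, |φ s| ≤ C := fun s hs =>
    (hMφ s hs).trans (by linarith [le_abs_self Mφ, abs_nonneg Mψ])
  have hψC : ∀ s ∈ Icc A B, |ψ s| ≤ C := fun s hs =>
    (hMψ s hs).trans (by linarith [le_abs_self Mψ, abs_nonneg Mφ])
  intro ε hε
  set η := min 1 (ε / (1 + 2 * C))
  have hη : 0 < η := lt_min one_pos (by positivity)
  have hηε : η * (1 + 2 * C) ≤ ε := by
    rw [← le_div_iff₀ (by positivity)]
    exact min_le_right _ _
  filter_upwards [hy η hη, hz η hη] with N hyN hzN k hk s hs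
  have hsAB := Icc_gridPt_subset hAB hk hs
  have ha := hyN k hk s hs
  have hb := hzN k hk s hs
  calc |y N k * z N k - φ s * ψ s|
      = |(y N k - φ s) * (z N k - ψ s) + (y N k - φ s) * ψ s + φ s * (z N k - ψ s)| := by
        ring_nf
    _ ≤ η * η + η * C + C * η := by
      refine (abs_add_three _ _ _).trans ?_
      simp only [abs_mul]
      gcongr
      · exact hψC s hsAB
      · exact hφC s hsAB
    _ ≤ η * (1 + 2 * C) := by nlinarith [min_le_left 1 (ε / (1 + 2 * C))]
    _ ≤ ε := hηε

lemma tendsto_sum (hAB : A ≤ B) (hφ : ContinuousOn φ (Icc A B)) (h : GridApprox A B y φ) :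
    Tendsto (fun N => ∑ k ∈ Finset.range (N - 1), gridStep A B N * y N k) atTop
      (𝓝 (∫ s in A..B, φ s)) := by
  refine Metric.tendsto_nhds.2 fun ε hε => ?_
  have hη : 0 < ε / (B - A + 1) := div_pos hε (by linarith)
  filter_upwards [h _ hη, eventually_ge_atTop 2] with N hN hN2
  have hlen : ∀ k, gridPt A B N (k + 1) - gridPt A B N k = gridStep A B N := fun k => by
    rw [gridPt_succ]; ring
  have hint : ∀ k < N - 1,
      IntervalIntegrable φ MeasureTheory.volume (gridPt A B N k) (gridPt A B N (k + 1)) :=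
    fun k hk => (hφ.mono (Icc_gridPt_subset hAB hk)).intervalIntegrable_of_Icc
      (gridPt_le_gridPt_succ hAB hN2)
  have htotal : ((N - 1 : ℕ) : ℝ) * gridStep A B N = B - A := by
    have := gridPt_sub_one (A := A) (B := B) hN2
    unfold gridPt at this
    linarith
  have hsplit : ∫ s in A..B, φ s =
      ∑ k ∈ Finset.range (N - 1), ∫ s in gridPt A B N k..gridPt A B N (k + 1), φ s := by
    rw [intervalIntegral.sum_integral_adjacent_intervals hint, gridPt_zero, gridPt_sub_one hN2]
  rw [Real.dist_eq, hsplit, ← Finset.sum_sub_distrib]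
  calc |∑ k ∈ Finset.range (N - 1), (gridStep A B N * y N k -
          ∫ s in gridPt A B N k..gridPt A B N (k + 1), φ s)|
      ≤ ∑ k ∈ Finset.range (N - 1), ε / (B - A + 1) * gridStep A B N := by
        refine (Finset.abs_sum_le_sum_abs _ _).trans (Finset.sum_le_sum fun k hk => ?_)
        have hk' := Finset.mem_range.1 hk
        simpa only [hlen] using abs_mul_sub_integral_le (gridPt_le_gridPt_succ hAB hN2)
          (hint k hk') (hN k hk')
    _ = ε / (B - A + 1) * (B - A) := by
        rw [Finset.sum_const, Finset.card_range, nsmul_eq_mul, ← htotal]; ring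
    _ < ε := by
        rw [div_mul_eq_mul_div, div_lt_iff₀ (by linarith)]
        exact mul_lt_mul_of_pos_left (by linarith) hε

end GridApprox

lemma hasDerivAt_derivWithin_Icc {f : ℝ → ℝ} {A B x : ℝ} (hf : DifferentiableOn ℝ f (Icc A B))
    (hx : x ∈ Ioo A B) : HasDerivAt f (derivWithin f (Icc A B) x) x :=
  (hf x (Ioo_subset_Icc_self hx)).hasDerivWithinAt.hasDerivAt (Icc_mem_nhds hx.1 hx.2)

lemma tendsto_one_sub_exp_neg_mul_div (c : ℝ) :
    Tendsto (fun x => (1 - Real.exp (-c * x)) / x) (𝓝[≠] 0) (𝓝 c) := by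
  have hderiv : HasDerivAt (fun x => 1 - Real.exp (-c * x)) c 0 := by
    simpa using (((hasDerivAt_id (0 : ℝ)).const_mul (-c)).exp).const_sub 1
  refine hderiv.tendsto_slope_zero.congr fun x => ?_
  simp only [zero_add, mul_zero, Real.exp_zero, smul_eq_mul]
  ring

section Innovations

variable {A B : ℝ} {f : ℝ → ℝ}

lemma gridApprox_slope (hAB : A < B) (hf : ContDiffOn ℝ 1 f (Icc A B)) :
    GridApprox A B (fun N k => (f (gridPt A B N (k + 1)) - f (gridPt A B N k)) / gridStep A B N)
      (derivWithin f (Icc A B)) := by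
  refine GridApprox.of_exists_eq hAB.le
    (hf.continuousOn_derivWithin (uniqueDiffOn_Icc hAB) le_rfl)
    ((eventually_ge_atTop 2).mono fun N hN k hk => ?_)
  have hsub := Icc_gridPt_subset hAB.le hk
  have hlen : gridPt A B N (k + 1) - gridPt A B N k = gridStep A B N := by
    rw [gridPt_succ]; ring
  have hlt : gridPt A B N k < gridPt A B N (k + 1) := sub_pos.1 (hlen ▸ gridStep_pos hAB hN)
  have hA := (hsub (left_mem_Icc.2 hlt.le)).1
  have hB := (hsub (right_mem_Icc.2 hlt.le)).2
  obtain ⟨ξ, hξ, hslope⟩ := exists_hasDerivAt_eq_slope f (derivWithin f (Icc A B)) hlt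
    (hf.continuousOn.mono hsub) fun x hx => hasDerivAt_derivWithin_Icc
      (hf.differentiableOn one_ne_zero) ⟨hA.trans_lt hx.1, hx.2.trans_le hB⟩
  exact ⟨ξ, Ioo_subset_Icc_self hξ, by rw [hslope, hlen]⟩

lemma gridApprox_innovation (hAB : A < B) (hf : ContDiffOn ℝ 1 f (Icc A B)) (lam : ℝ) :
    GridApprox A B (fun N k => (f (gridPt A B N (k + 1)) -
        Real.exp (-lam * gridStep A B N) * f (gridPt A B N k)) / gridStep A B N)
      (fun s => derivWithin f (Icc A B) s + lam * f s) := by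
  have hdecay := (tendsto_one_sub_exp_neg_mul_div lam).comp (tendsto_gridStep_nhdsNE hAB)
  have hvalue : GridApprox A B (fun N k => f (gridPt A B N k)) f :=
    GridApprox.of_exists_eq hAB.le hf.continuousOn ((eventually_ge_atTop 2).mono fun N hN k _ =>
      ⟨_, left_mem_Icc.2 (gridPt_le_gridPt_succ hAB.le hN), rfl⟩)
  have h := (gridApprox_slope hAB hf).add
    ((GridApprox.const hdecay).mul hAB.le continuousOn_const hf.continuousOn hvalue)
  convert h using 3 with N k
  simp only [Function.comp_apply]
  ring

lemma tendsto_sum_sq_innovation (hAB : A < B) (hf : ContDiffOn ℝ 1 f (Icc A B)) {lam : ℝ}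
    (hlam : lam ≠ 0) :
    Tendsto (fun N => ∑ k ∈ Finset.range (N - 1), (f (gridPt A B N (k + 1)) -
        Real.exp (-lam * gridStep A B N) * f (gridPt A B N k)) ^ 2 /
          (1 - Real.exp (-lam * gridStep A B N) ^ 2)) atTop
      (𝓝 (1 / (2 * lam) * ∫ s in A..B, (derivWithin f (Icc A B) s + lam * f s) ^ 2)) := by
  have hcont : ContinuousOn (fun s => derivWithin f (Icc A B) s + lam * f s) (Icc A B) :=
    (hf.continuousOn_derivWithin (uniqueDiffOn_Icc hAB) le_rfl).add
      (continuousOn_const.mul hf.continuousOn)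
  have hinnov := gridApprox_innovation hAB hf lam
  have hsum := (hinnov.mul hAB.le hcont hcont hinnov).tendsto_sum hAB.le (hcont.mul hcont)
  simp only [← sq] at hsum
  have hfactor : Tendsto (fun N => gridStep A B N / (1 - Real.exp (-lam * gridStep A B N) ^ 2))
      atTop (𝓝 (1 / (2 * lam))) := by
    have h := ((tendsto_one_sub_exp_neg_mul_div (2 * lam)).comp
      (tendsto_gridStep_nhdsNE hAB)).inv₀ (mul_ne_zero two_ne_zero hlam)
    rw [one_div]
    refine h.congr fun N => ?_
    rw [Function.comp_apply, inv_div, ← Real.exp_nat_mul]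
    ring_nf
  refine (hfactor.mul hsum).congr' ((eventually_ge_atTop 2).mono fun N hN => ?_)
  have hΔ := (gridStep_pos hAB hN).ne'
  rw [Finset.mul_sum]
  refine Finset.sum_congr rfl fun k _ => ?_
  field_simp

end Innovations

lemma integral_derivWithin_add_mul_sq {A B : ℝ} {f : ℝ → ℝ} (hAB : A < B)
    (hf : ContDiffOn ℝ 2 f (Icc A B)) (c : ℝ) :
    ∫ t in A..B, (derivWithin f (Icc A B) t + c * f t) ^ 2 =
      (∫ t in A..B, (c ^ 2 * f t - derivWithin (derivWithin f (Icc A B)) (Icc A B) t) * f t)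
        + (derivWithin f (Icc A B) B * f B + c * f B ^ 2)
        - (derivWithin f (Icc A B) A * f A + c * f A ^ 2) := by
  set f' := derivWithin f (Icc A B)
  set f'' := derivWithin f' (Icc A B)
  have hu := uniqueDiffOn_Icc hAB
  have hf' : ContDiffOn ℝ 1 f' (Icc A B) := hf.derivWithin hu (by norm_num)
  have hfc := hf.continuousOn
  have hf'c := hf'.continuousOn
  have hf''c : ContinuousOn f'' (Icc A B) := hf'.continuousOn_derivWithin hu le_rfl
  have hG' : ContinuousOn (fun t => f'' t * f t + f' t * f' t + c * (f' t * f t + f t * f' t))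
      (Icc A B) := by fun_prop
  have hftc : ∫ t in A..B, (f'' t * f t + f' t * f' t + c * (f' t * f t + f t * f' t)) =
      (f' B * f B + c * (f B * f B)) - (f' A * f A + c * (f A * f A)) :=
    intervalIntegral.integral_eq_sub_of_hasDerivAt_of_le hAB.le (by fun_prop)
      (fun x hx =>
        have h1 := hasDerivAt_derivWithin_Icc (hf.differentiableOn two_ne_zero) hx
        have h2 := hasDerivAt_derivWithin_Icc (hf'.differentiableOn one_ne_zero) hx
        (h2.mul h1).add ((h1.mul h1).const_mul c))
      (hG'.intervalIntegrable_of_Icc hAB.le)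
  have hsplit : ∫ t in A..B, (f' t + c * f t) ^ 2 = (∫ t in A..B, (c ^ 2 * f t - f'' t) * f t) +
      ∫ t in A..B, (f'' t * f t + f' t * f' t + c * (f' t * f t + f t * f' t)) := by
    have hX : ContinuousOn (fun t => (c ^ 2 * f t - f'' t) * f t) (Icc A B) := by fun_prop
    rw [← intervalIntegral.integral_add (hX.intervalIntegrable_of_Icc hAB.le)
      (hG'.intervalIntegrable_of_Icc hAB.le)]
    exact intervalIntegral.integral_congr fun t _ => by ring
  rw [hsplit, hftc]
  ring

/-- For the Ornstein–Uhlenbeck kernel `e^{-λ|s-t|}` on an equidistant grid on `[A,B]`,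
the quadratic form `fᵀ Σ_N⁻¹ f` converges, as the number of grid points `N → ∞`, to
`(1/(2λ))[f(A)(λf(A) - f'(A)) + f(B)(λf(B) + f'(B)) + ∫_A^B (λ²f(t) - f''(t)) f(t) dt]`. -/
theorem ar1_quadratic_form_limit (lam : ℝ) (hlam : 0 < lam)
    (A B : ℝ) (hAB : A < B) (f : ℝ → ℝ)
    (hf : ContDiffOn ℝ 2 f (Set.Icc A B)) :
    Tendsto (fun N : ℕ =>
        (fun j : Fin N => f (A + ((j : ℕ) : ℝ) * ((B - A) / ((N : ℝ) - 1)))) ⬝ᵥ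
          ((Matrix.of fun i j : Fin N =>
              Real.exp (-lam * |(A + ((i : ℕ) : ℝ) * ((B - A) / ((N : ℝ) - 1)))
                - (A + ((j : ℕ) : ℝ) * ((B - A) / ((N : ℝ) - 1)))|))⁻¹
            *ᵥ fun j : Fin N => f (A + ((j : ℕ) : ℝ) * ((B - A) / ((N : ℝ) - 1)))))
      atTop
      (nhds ((1 / (2 * lam)) *
        (f A * (lam * f A - derivWithin f (Set.Icc A B) A)
          + f B * (lam * f B + derivWithin f (Set.Icc A B) B)
          + ∫ t in A..B,
              (lam ^ 2 * f t - derivWithin (derivWithin f (Set.Icc A B)) (Set.Icc A B) t)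
                * f t))) := by
  have hlimit : f A ^ 2 + 1 / (2 * lam) *
      ∫ t in A..B, (derivWithin f (Icc A B) t + lam * f t) ^ 2 =
      (1 / (2 * lam)) * (f A * (lam * f A - derivWithin f (Icc A B) A)
        + f B * (lam * f B + derivWithin f (Icc A B) B)
        + ∫ t in A..B,
            (lam ^ 2 * f t - derivWithin (derivWithin f (Icc A B)) (Icc A B) t) * f t) := by
    rw [integral_derivWithin_add_mul_sq hAB hf lam]
    field_simp
    ring
  rw [← hlimit]
  refine ((tendsto_sum_sq_innovation hAB (hf.of_le (by norm_num)) hlam.ne').const_add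
    (f A ^ 2)).congr' ((eventually_ge_atTop 2).mono fun N hN => ?_)
  have hΔ := gridStep_pos hAB hN
  have hr : Real.exp (-lam * gridStep A B N) ^ 2 ≠ 1 :=
    (pow_lt_one₀ (Real.exp_pos _).le
      (Real.exp_lt_one_iff.2 (mul_neg_of_neg_of_pos (neg_neg_of_pos hlam) hΔ)) two_ne_zero).ne
  dsimp only
  rw [expKernel_grid_eq_corr lam A ((B - A) / ((N : ℝ) - 1)) hΔ.le]
  have hquad := AR1.dotProduct_corr_inv_mulVec _ hr (by omega : 0 < N)
    (fun k => f (gridPt A B N k))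
  rw [gridPt_zero] at hquad
  exact hquad.symm
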